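/- arXiv:2007.05139 — 3 statements merged into one kernel-verified Lean document; each statement's English description precedes it below -/
import Mathlib

section
/- For any faithful and private (n,K) mechanism and every position i ∈ {1,…,n}, the probability that Y_i is not erased satisfies P(Y_i ≠ ∗) ≤ ∑_{a∈𝒳} min_{u} P(X_i = a | X_K = u), where the minimum is over all u ∈ 𝒳^{|K|} with P(X_K = u) > 0. -/
/-!
Privacy lets `P(X_K = u) P(Y_i = a)` be computed as `P(X_K = u, Y_i = a)`, and faithfulness makes
`Y_i = a` possible only when `X_i = a`. Hence `P(Y_i = a) ≤ P(X_i = a | X_K = u)` for every `u`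
of positive probability, so `P(Y_i = a)` is at most the minimum over `u`; summing over `a` bounds
`P(Y_i ≠ ∗)`.
-/

open Finset
open scoped Classical

noncomputable section

namespace GenotypeHiding

variable {X : Type} [Fintype X] [DecidableEq X]

/-- Restriction of a sequence `x` to the sensitive positions `K`. -/
def restr {n : ℕ} (K : Finset (Fin n)) (x : Fin n → X) : ↥K → X := fun i => x (i : Fin n)

/-- `P(X_K = u)` under the data distribution `p`. -/
def pK {n : ℕ} (p : (Fin n → X) → ℝ) (K : Finset (Fin n)) (u : ↥K → X) : ℝ :=
  ∑ x : Fin n → X, if restr K x = u then p x else 0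

/-- `P(X_i = a ∧ X_K = u)` under the data distribution `p`. -/
def pIK {n : ℕ} (p : (Fin n → X) → ℝ) (K : Finset (Fin n)) (i : Fin n) (a : X)
    (u : ↥K → X) : ℝ :=
  ∑ x : Fin n → X, if x i = a ∧ restr K x = u then p x else 0

/-- `min_u P(X_i = a | X_K = u)`, the minimum being taken over all values `u` of the
sensitive positions with `P(X_K = u) > 0`. -/
def minCond {n : ℕ} (p : (Fin n → X) → ℝ) (K : Finset (Fin n)) (i : Fin n) (a : X) : ℝ :=
  sInf {r : ℝ | ∃ u : ↥K → X, 0 < pK p K u ∧ r = pIK p K i a u / pK p K u}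

/-- `P(Y_i = a)` for the output `Y` of the mechanism `w` applied to data distributed as `p`. -/
def pY {n : ℕ} (p : (Fin n → X) → ℝ) (w : (Fin n → X) → (Fin n → Option X) → ℝ) (i : Fin n)
    (a : X) : ℝ :=
  ∑ y : Fin n → Option X, if y i = some a then ∑ x : Fin n → X, p x * w x y else 0

theorem ite_ne_none_eq_sum_ite_eq_some {α M : Type*} [Fintype α] [DecidableEq α]
    [AddCommMonoid M] (o : Option α) (c : M) :
    (if o ≠ none then c else 0) = ∑ a : α, if o = some a then c else 0 := by
  cases o <;> simp

theorem sum_ite_eq_some_le {α Y : Type*} [DecidableEq α] [Fintype Y] (q : Y → ℝ)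
    (hq0 : ∀ y, 0 ≤ q y) (hq1 : ∑ y, q y ≤ 1) (f : Y → Option α) (b : α)
    (hf : ∀ y, 0 < q y → f y = some b ∨ f y = none) (a : α) :
    ∑ y, (if f y = some a then q y else 0) ≤ if b = a then 1 else 0 := by
  by_cases hba : b = a
  · rw [if_pos hba]
    exact (sum_le_sum fun y _ => by split_ifs <;> simp [hq0 y]).trans hq1
  · rw [if_neg hba]
    refine (sum_eq_zero fun y _ => ?_).le
    split_ifs with hfy
    · refine (hq0 y).eq_or_lt.elim Eq.symm fun hy => ?_
      rcases hf y hy with h | h <;> simp_all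
    · rfl

theorem exists_pK_pos {n : ℕ} (p : (Fin n → X) → ℝ) (hp0 : ∀ x, 0 ≤ p x)
    (hp1 : ∑ x : Fin n → X, p x = 1) (K : Finset (Fin n)) : ∃ u, 0 < pK p K u := by
  obtain ⟨x, -, hx⟩ := exists_lt_of_sum_lt (s := univ) (f := 0) (g := p) (by simp [hp1])
  refine ⟨restr K x, hx.trans_le ?_⟩
  simpa [pK] using single_le_sum (f := fun x' => if restr K x' = restr K x then p x' else 0)
    (fun x' _ => by split_ifs <;> simp [hp0 x']) (mem_univ x)

section Mechanism

variable {n : ℕ} (p : (Fin n → X) → ℝ) (K : Finset (Fin n))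
  (w : (Fin n → X) → (Fin n → Option X) → ℝ)

def IsFaithful : Prop :=
  ∀ x y, 0 < w x y → ∀ i : Fin n, y i = some (x i) ∨ y i = none

/-- Independence of `Y` and `X_K`: `P(X_K = u, Y = y) = P(X_K = u) P(Y = y)`. -/
def IsPrivate : Prop :=
  ∀ (u : ↥K → X) (y : Fin n → Option X),
    (∑ x : Fin n → X, if restr K x = u then p x * w x y else 0)
      = pK p K u * ∑ x : Fin n → X, p x * w x y

theorem pK_mul_pY_le_pIK (hp0 : ∀ x, 0 ≤ p x) (hw0 : ∀ x y, 0 ≤ w x y)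
    (hw1 : ∀ x, ∑ y : Fin n → Option X, w x y = 1)
    (hfaithful : IsFaithful w) (hprivate : IsPrivate p K w)
    (i : Fin n) (a : X) (u : ↥K → X) :
    pK p K u * pY p w i a ≤ pIK p K i a u := by
  calc pK p K u * pY p w i a
      = ∑ y : Fin n → Option X, if y i = some a then
          ∑ x : Fin n → X, (if restr K x = u then p x * w x y else 0) else 0 := by
        rw [pY, mul_sum]
        refine sum_congr rfl fun y _ => ?_
        split_ifs
        · exact (hprivate u y).symm
        · exact mul_zero _
    _ = ∑ x : Fin n → X, if restr K x = u then
          p x * ∑ y : Fin n → Option X, (if y i = some a then w x y else 0) else 0 := by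
        simp only [ite_sum_zero]
        rw [sum_comm]
        refine sum_congr rfl fun x _ => ?_
        by_cases hx : restr K x = u
        · simp only [hx, if_true, mul_sum, mul_ite, mul_zero]
        · simp [hx]
    _ ≤ ∑ x : Fin n → X, if restr K x = u then p x * (if x i = a then 1 else 0) else 0 := by
        refine sum_le_sum fun x _ => ?_
        by_cases hx : restr K x = u
        · simp only [hx, if_true]
          exact mul_le_mul_of_nonneg_left (sum_ite_eq_some_le (w x) (hw0 x) (hw1 x).le
            (· i) (x i) (fun y hy => hfaithful x y hy i) a) (hp0 x)
        · simp [hx]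
    _ = pIK p K i a u := by
        refine sum_congr rfl fun x _ => ?_
        by_cases hx : restr K x = u <;> by_cases ha : x i = a <;> simp [hx, ha]

theorem pY_le_minCond (hp0 : ∀ x, 0 ≤ p x) (hp1 : ∑ x : Fin n → X, p x = 1)
    (hw0 : ∀ x y, 0 ≤ w x y) (hw1 : ∀ x, ∑ y : Fin n → Option X, w x y = 1)
    (hfaithful : IsFaithful w) (hprivate : IsPrivate p K w)
    (i : Fin n) (a : X) :
    pY p w i a ≤ minCond p K i a := by
  obtain ⟨u₀, hu₀⟩ := exists_pK_pos p hp0 hp1 K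
  refine le_csInf ⟨_, u₀, hu₀, rfl⟩ ?_
  rintro _ ⟨u, hu, rfl⟩
  rw [le_div_iff₀ hu, mul_comm]
  exact pK_mul_pY_le_pIK p K w hp0 hw0 hw1 hfaithful hprivate i a u

theorem sum_sum_ite_ne_none_eq_sum_pY (i : Fin n) :
    (∑ x : Fin n → X, ∑ y : Fin n → Option X, if y i ≠ none then p x * w x y else 0)
      = ∑ a : X, pY p w i a := by
  calc _ = ∑ y : Fin n → Option X, if y i ≠ none then ∑ x : Fin n → X, p x * w x y else 0 := by
        rw [sum_comm]
        simp only [ite_sum_zero]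
    _ = ∑ a : X, pY p w i a := by
        simp only [ite_ne_none_eq_sum_ite_eq_some, pY]
        exact sum_comm

end Mechanism

theorem nonErasureProbability_le_general {n : ℕ}
    (p : (Fin n → X) → ℝ) (hp0 : ∀ x, 0 ≤ p x) (hp1 : ∑ x : Fin n → X, p x = 1)
    (K : Finset (Fin n))
    (w : (Fin n → X) → (Fin n → Option X) → ℝ)
    (hw0 : ∀ x y, 0 ≤ w x y) (hw1 : ∀ x, ∑ y : Fin n → Option X, w x y = 1)
    (hfaithful : ∀ x y, 0 < w x y → ∀ i : Fin n, y i = some (x i) ∨ y i = none)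
    (hprivate : ∀ (u : ↥K → X) (y : Fin n → Option X),
      (∑ x : Fin n → X, if restr K x = u then p x * w x y else 0)
        = pK p K u * ∑ x : Fin n → X, p x * w x y)
    (i : Fin n) :
    (∑ x : Fin n → X, ∑ y : Fin n → Option X, if y i ≠ none then p x * w x y else 0)
      ≤ ∑ a : X, minCond p K i a := by
  rw [sum_sum_ite_ne_none_eq_sum_pY]
  exact sum_le_sum fun a _ => pY_le_minCond p K w hp0 hp1 hw0 hw1 hfaithful hprivate i a

/-- for any faithful and private `(n, K)` mechanism `w` and every position `i`,
`P(Y_i ≠ ∗) ≤ ∑_{a ∈ 𝒳} min_u P(X_i = a | X_K = u)`. -/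
theorem nonErasureProbability_le {n : ℕ} (hn : 1 ≤ n) (hX : 2 ≤ Fintype.card X)
    (p : (Fin n → X) → ℝ) (hp0 : ∀ x, 0 ≤ p x) (hp1 : ∑ x : Fin n → X, p x = 1)
    (K : Finset (Fin n))
    (w : (Fin n → X) → (Fin n → Option X) → ℝ)
    (hw0 : ∀ x y, 0 ≤ w x y) (hw1 : ∀ x, ∑ y : Fin n → Option X, w x y = 1)
    (hfaithful : ∀ x y, 0 < w x y → ∀ i : Fin n, y i = some (x i) ∨ y i = none)
    (hprivate : ∀ (u : ↥K → X) (y : Fin n → Option X),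
      (∑ x : Fin n → X, if restr K x = u then p x * w x y else 0)
        = pK p K u * ∑ x : Fin n → X, p x * w x y)
    (i : Fin n) :
    (∑ x : Fin n → X, ∑ y : Fin n → Option X, if y i ≠ none then p x * w x y else 0)
      ≤ ∑ a : X, minCond p K i a :=
  nonErasureProbability_le_general p hp0 hp1 K w hw0 hw1 hfaithful hprivate i

end GenotypeHiding
end
end

section
/- Under the sequential privacy mechanism, for every i, every value u' of X_K with positive probability, and every history y_{[i−1]} occurring with positive probability: P(Y_i = ∗ | X_K = u', Y_{[i−1]} = y_{[i−1]}) = 1 − ∑_{a∈𝒳} min_{u} P(X_i = a | X_K = u, Y_{[i−1]} = y_{[i−1]}), and for every a ∈ 𝒳, P(Y_i = a | X_K = u', Y_{[i−1]} = y_{[i−1]}) = min_{u} P(X_i = a | X_K = u, Y_{[i−1]} = y_{[i−1]}); in particular both conditional probabilities do not depend on u'. -/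
/-!
Given `X = x` and the history `h`, the mechanism releases `Y_i = x_i` with probability
`minC(x_i) / P(X_i = x_i | X_K = x_K, h)` and never releases any other symbol. Summing over the
`x` with `x_K = u'` and `x_i = a`, this ratio is the constant `minC(a) / P(X_i = a | X_K = u', h)`,
so `P(Y_i = a, X_K = u', h) = minC(a) · P(X_K = u', h)`. Since `Y_i ∈ 𝒳 ∪ {∗}`, the erasure
probability is what remains.
-/

open Finset
open scoped Classical

noncomputable section

namespace GenotypeHiding

variable {X : Type} [Fintype X] [DecidableEq X]

/-- `y` agrees with the history `h` on all coordinates `j` with `j < t`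
(i.e. the event `Y_{[t]} = h_{[t]}`, zero-based). -/
def agreeN {n : ℕ} (t : ℕ) (y h : Fin n → Option X) : Prop :=
  ∀ j : Fin n, (j : ℕ) < t → y j = h j

/-- `P(X = x, Y_{[t]} = h_{[t]})` under the joint law `J` of `(X, Y)`. -/
def prXH {n : ℕ} (J : (Fin n → X) → (Fin n → Option X) → ℝ) (t : ℕ)
    (x : Fin n → X) (h : Fin n → Option X) : ℝ :=
  ∑ y : Fin n → Option X, if agreeN t y h then J x y else 0

/-- `P(Y_i = b, X = x, Y_{[t]} = h_{[t]})` under the joint law `J`. -/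
def prXHY {n : ℕ} (J : (Fin n → X) → (Fin n → Option X) → ℝ) (t : ℕ)
    (x : Fin n → X) (h : Fin n → Option X) (i : Fin n) (b : Option X) : ℝ :=
  ∑ y : Fin n → Option X, if y i = b ∧ agreeN t y h then J x y else 0

/-- `P(Y_{[t]} = h_{[t]})` under the joint law `J`. -/
def prH {n : ℕ} (J : (Fin n → X) → (Fin n → Option X) → ℝ) (t : ℕ)
    (h : Fin n → Option X) : ℝ :=
  ∑ x : Fin n → X, prXH J t x h

/-- `P(X_K = u, Y_{[t]} = h_{[t]})` under the joint law `J`. -/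
def prKH {n : ℕ} (J : (Fin n → X) → (Fin n → Option X) → ℝ) (K : Finset (Fin n))
    (t : ℕ) (u : ↥K → X) (h : Fin n → Option X) : ℝ :=
  ∑ x : Fin n → X, ∑ y : Fin n → Option X,
    if restr K x = u ∧ agreeN t y h then J x y else 0

/-- `P(X_i = a, X_K = u, Y_{[t]} = h_{[t]})` under the joint law `J`. -/
def prIKH {n : ℕ} (J : (Fin n → X) → (Fin n → Option X) → ℝ) (K : Finset (Fin n))
    (t : ℕ) (i : Fin n) (a : X) (u : ↥K → X) (h : Fin n → Option X) : ℝ :=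
  ∑ x : Fin n → X, ∑ y : Fin n → Option X,
    if x i = a ∧ restr K x = u ∧ agreeN t y h then J x y else 0

/-- `P(Y_i = b, X_K = u, Y_{[t]} = h_{[t]})` under the joint law `J`. -/
def prYKH {n : ℕ} (J : (Fin n → X) → (Fin n → Option X) → ℝ) (K : Finset (Fin n))
    (t : ℕ) (i : Fin n) (b : Option X) (u : ↥K → X) (h : Fin n → Option X) : ℝ :=
  ∑ x : Fin n → X, ∑ y : Fin n → Option X,
    if y i = b ∧ restr K x = u ∧ agreeN t y h then J x y else 0

/-- `P(X_i = a | X_K = u, Y_{[t]} = h_{[t]})` under the joint law `J`. -/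
def condX {n : ℕ} (J : (Fin n → X) → (Fin n → Option X) → ℝ) (K : Finset (Fin n))
    (t : ℕ) (i : Fin n) (a : X) (u : ↥K → X) (h : Fin n → Option X) : ℝ :=
  prIKH J K t i a u h / prKH J K t u h

/-- `min_u P(X_i = a | X_K = u, Y_{[t]} = h_{[t]})`, the minimum being over all `u` with
`P(X_K = u, Y_{[t]} = h_{[t]}) > 0`. -/
def minC {n : ℕ} (J : (Fin n → X) → (Fin n → Option X) → ℝ) (K : Finset (Fin n))
    (t : ℕ) (i : Fin n) (a : X) (h : Fin n → Option X) : ℝ :=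
  sInf {r : ℝ | ∃ u : ↥K → X, 0 < prKH J K t u h ∧ r = condX J K t i a u h}

/-- `J` is the joint law of `(X, Y)` where `Y` is generated from `X ∼ p` by the sequential
privacy mechanism: `Y_i ∈ {X_i, ∗}`, and conditionally on `X = x` and the previously
generated outputs `Y_{[i-1]} = y_{[i-1]}`, the mechanism releases `Y_i = x_i` with
probability `min_u P(X_i = x_i | X_K = u, Y_{[i-1]}) / P(X_i = x_i | X_K = x_K, Y_{[i-1]})`,
and erases (`Y_i = ∗`) with the complementary probability. -/
def IsSequentialMechanism {n : ℕ} (p : (Fin n → X) → ℝ) (K : Finset (Fin n))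
    (J : (Fin n → X) → (Fin n → Option X) → ℝ) : Prop :=
  (∀ x y, 0 ≤ J x y) ∧
  (∀ x, ∑ y : Fin n → Option X, J x y = p x) ∧
  (∀ x y, 0 < J x y → ∀ i : Fin n, y i = some (x i) ∨ y i = none) ∧
  (∀ (i : Fin n) (x : Fin n → X) (h : Fin n → Option X), 0 < prXH J (i : ℕ) x h →
    prXHY J (i : ℕ) x h i (some (x i))
      = (minC J K (i : ℕ) i (x i) h / condX J K (i : ℕ) i (x i) (restr K x) h)
          * prXH J (i : ℕ) x h)

end GenotypeHiding

namespace GenotypeHiding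

variable {X : Type} [Fintype X]

lemma prXH_nonneg {n : ℕ} {J : (Fin n → X) → (Fin n → Option X) → ℝ} {t : ℕ}
    (hJ0 : ∀ x y, 0 ≤ J x y) (x : Fin n → X) (h : Fin n → Option X) : 0 ≤ prXH J t x h :=
  sum_nonneg fun y _ => ite_nonneg (hJ0 x y) le_rfl

variable [DecidableEq X]

section Marginals

variable {n : ℕ} {J : (Fin n → X) → (Fin n → Option X) → ℝ} {K : Finset (Fin n)} {t : ℕ}

lemma prXHY_nonneg (hJ0 : ∀ x y, 0 ≤ J x y) (x : Fin n → X) (h : Fin n → Option X)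
    (i : Fin n) (b : Option X) : 0 ≤ prXHY J t x h i b :=
  sum_nonneg fun y _ => ite_nonneg (hJ0 x y) le_rfl

lemma prXHY_le_prXH (hJ0 : ∀ x y, 0 ≤ J x y) (x : Fin n → X) (h : Fin n → Option X)
    (i : Fin n) (b : Option X) : prXHY J t x h i b ≤ prXH J t x h :=
  sum_le_sum fun y _ => by
    split_ifs with hyb hy hy
    · exact le_rfl
    · exact absurd hyb.2 hy
    · exact hJ0 x y
    · exact le_rfl

lemma prIKH_nonneg (hJ0 : ∀ x y, 0 ≤ J x y) (i : Fin n) (a : X) (u : ↥K → X)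
    (h : Fin n → Option X) : 0 ≤ prIKH J K t i a u h :=
  sum_nonneg fun x _ => sum_nonneg fun y _ => ite_nonneg (hJ0 x y) le_rfl

lemma prKH_nonneg (hJ0 : ∀ x y, 0 ≤ J x y) (u : ↥K → X) (h : Fin n → Option X) :
    0 ≤ prKH J K t u h :=
  sum_nonneg fun x _ => sum_nonneg fun y _ => ite_nonneg (hJ0 x y) le_rfl

lemma prYKH_eq_sum_prXHY (i : Fin n) (b : Option X) (u : ↥K → X) (h : Fin n → Option X) :
    prYKH J K t i b u h = ∑ x, if restr K x = u then prXHY J t x h i b else 0 := by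
  refine sum_congr rfl fun x _ => ?_
  by_cases hx : restr K x = u <;> simp [prXHY, hx]

lemma prIKH_eq_sum_prXH (i : Fin n) (a : X) (u : ↥K → X) (h : Fin n → Option X) :
    prIKH J K t i a u h = ∑ x, if x i = a ∧ restr K x = u then prXH J t x h else 0 := by
  refine sum_congr rfl fun x _ => ?_
  by_cases hxa : x i = a <;> by_cases hx : restr K x = u <;> simp [prXH, hxa, hx]

lemma sum_prYKH (i : Fin n) (u : ↥K → X) (h : Fin n → Option X) :
    ∑ b, prYKH J K t i b u h = prKH J K t u h := by
  unfold prYKH prKH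
  rw [sum_comm]
  refine sum_congr rfl fun x _ => ?_
  rw [sum_comm]
  refine sum_congr rfl fun y _ => ?_
  simp only [ite_and, Fintype.sum_ite_eq]

end Marginals

section MinC

variable {n : ℕ} {J : (Fin n → X) → (Fin n → Option X) → ℝ} {K : Finset (Fin n)} {t : ℕ}
  {i : Fin n} {a : X} {h : Fin n → Option X}

lemma condX_nonneg (hJ0 : ∀ x y, 0 ≤ J x y) (u : ↥K → X) : 0 ≤ condX J K t i a u h :=
  div_nonneg (prIKH_nonneg hJ0 i a u h) (prKH_nonneg hJ0 u h)

lemma minC_le_condX (hJ0 : ∀ x y, 0 ≤ J x y) {u : ↥K → X} (hu : 0 < prKH J K t u h) :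
    minC J K t i a h ≤ condX J K t i a u h :=
  csInf_le ⟨0, by rintro r ⟨v, -, rfl⟩; exact condX_nonneg hJ0 v⟩ ⟨u, hu, rfl⟩

lemma minC_nonneg (hJ0 : ∀ x y, 0 ≤ J x y) {u : ↥K → X} (hu : 0 < prKH J K t u h) :
    0 ≤ minC J K t i a h :=
  le_csInf ⟨_, u, hu, rfl⟩ (by rintro r ⟨v, -, rfl⟩; exact condX_nonneg hJ0 v)

/- When `prIKH = 0` the left side is `0` whatever the junk value of the division, and
`minC = 0` because `u` itself takes part in the minimum. -/
lemma minC_div_condX_mul_prIKH (hJ0 : ∀ x y, 0 ≤ J x y) {u : ↥K → X}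
    (hu : 0 < prKH J K t u h) :
    minC J K t i a h / condX J K t i a u h * prIKH J K t i a u h
      = minC J K t i a h * prKH J K t u h := by
  by_cases hI : prIKH J K t i a u h = 0
  · have hcond : condX J K t i a u h = 0 := by rw [condX, hI, zero_div]
    have hmin : minC J K t i a h = 0 :=
      le_antisymm (hcond ▸ minC_le_condX hJ0 hu) (minC_nonneg hJ0 hu)
    rw [hI, hmin, mul_zero, zero_mul]
  · rw [condX]
    field_simp

end MinC

namespace IsSequentialMechanism

variable {n : ℕ} {p : (Fin n → X) → ℝ} {K : Finset (Fin n)}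
  {J : (Fin n → X) → (Fin n → Option X) → ℝ}

lemma prXHY_self (hJ : IsSequentialMechanism p K J) (i : Fin n) (x : Fin n → X)
    (h : Fin n → Option X) :
    prXHY J i x h i (some (x i))
      = minC J K i i (x i) h / condX J K i i (x i) (restr K x) h * prXH J i x h := by
  rcases (prXH_nonneg hJ.1 x h).eq_or_lt with h0 | hpos
  · rw [← h0, mul_zero]
    exact le_antisymm (h0 ▸ prXHY_le_prXH hJ.1 x h i _) (prXHY_nonneg hJ.1 x h i _)
  · exact hJ.2.2.2 i x h hpos

lemma prXHY_some_of_ne (hJ : IsSequentialMechanism p K J) {t : ℕ} {i : Fin n} {x : Fin n → X}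
    {a : X} (hxa : x i ≠ a) (h : Fin n → Option X) : prXHY J t x h i (some a) = 0 := by
  refine sum_eq_zero fun y _ => ite_eq_right_iff.2 fun ⟨hya, _⟩ => ?_
  by_contra hJxy
  rcases hJ.2.2.1 x y ((hJ.1 x y).lt_of_ne' hJxy) i with hy | hy <;> rw [hya] at hy
  · exact hxa (Option.some_injective _ hy).symm
  · exact Option.some_ne_none a hy

lemma prYKH_some (hJ : IsSequentialMechanism p K J) (i : Fin n) (a : X) {u : ↥K → X}
    {h : Fin n → Option X} (hu : 0 < prKH J K i u h) :
    prYKH J K i i (some a) u h = minC J K i i a h * prKH J K i u h := by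
  rw [← minC_div_condX_mul_prIKH hJ.1 hu, prYKH_eq_sum_prXHY, prIKH_eq_sum_prXH, mul_sum]
  refine sum_congr rfl fun x _ => ?_
  by_cases hxa : x i = a
  · by_cases hx : restr K x = u
    · rw [if_pos hx, if_pos ⟨hxa, hx⟩, ← hxa, ← hx, hJ.prXHY_self]
    · rw [if_neg hx, if_neg (hx ·.2), mul_zero]
  · rw [hJ.prXHY_some_of_ne hxa, ite_self, if_neg (hxa ·.1), mul_zero]

end IsSequentialMechanism

theorem sequentialMechanism_condProb_general {n : ℕ}
    (p : (Fin n → X) → ℝ)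
    (K : Finset (Fin n))
    (J : (Fin n → X) → (Fin n → Option X) → ℝ)
    (hJ : IsSequentialMechanism p K J)
    (i : Fin n) (u' : ↥K → X) (h : Fin n → Option X)
    (hpos : 0 < prKH J K (i : ℕ) u' h) :
    prYKH J K (i : ℕ) i none u' h / prKH J K (i : ℕ) u' h
        = 1 - ∑ a : X, minC J K (i : ℕ) i a h ∧
    ∀ a : X, prYKH J K (i : ℕ) i (some a) u' h / prKH J K (i : ℕ) u' h
        = minC J K (i : ℕ) i a h := by
  have hsome : ∀ a, prYKH J K i i (some a) u' h = minC J K i i a h * prKH J K i u' h :=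
    fun a => hJ.prYKH_some i a hpos
  have htotal := sum_prYKH (J := J) (t := i) i u' h
  rw [Fintype.sum_option] at htotal
  refine ⟨?_, fun a => by rw [hsome, mul_div_cancel_right₀ _ hpos.ne']⟩
  rw [div_eq_iff hpos.ne', sub_mul, one_mul, sum_mul, ← sum_congr rfl fun a _ => hsome a]
  linarith

/-- under the sequential privacy mechanism, for every `i`, every value `u'` of
`X_K` and every history `y_{[i-1]} = h` with `P(X_K = u', Y_{[i-1]} = h) > 0`, the
conditional probability of erasure is
`P(Y_i = ∗ | X_K = u', Y_{[i-1]} = h) = 1 - ∑_a min_u P(X_i = a | X_K = u, Y_{[i-1]} = h)`,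
and for every `a ∈ 𝒳`,
`P(Y_i = a | X_K = u', Y_{[i-1]} = h) = min_u P(X_i = a | X_K = u, Y_{[i-1]} = h)`;
in particular neither conditional probability depends on `u'`. -/
theorem sequentialMechanism_condProb {n : ℕ} (hn : 1 ≤ n) (hX : 2 ≤ Fintype.card X)
    (p : (Fin n → X) → ℝ) (hp0 : ∀ x, 0 ≤ p x) (hp1 : ∑ x : Fin n → X, p x = 1)
    (K : Finset (Fin n))
    (J : (Fin n → X) → (Fin n → Option X) → ℝ)
    (hJ : IsSequentialMechanism p K J)
    (i : Fin n) (u' : ↥K → X) (h : Fin n → Option X)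
    (hpos : 0 < prKH J K (i : ℕ) u' h) :
    prYKH J K (i : ℕ) i none u' h / prKH J K (i : ℕ) u' h
        = 1 - ∑ a : X, minC J K (i : ℕ) i a h ∧
    ∀ a : X, prYKH J K (i : ℕ) i (some a) u' h / prKH J K (i : ℕ) u' h
        = minC J K (i : ℕ) i a h :=
  sequentialMechanism_condProb_general p K J hJ i u' h hpos

end GenotypeHiding
end
end

section
/- Suppose X_1,…,X_n forms a Markov chain and K = {1}. Then under the sequential privacy mechanism, for every i > 1, whenever the previously released symbol satisfies y_{i−1} ≠ ∗, one has P(X_i = a | X_1 = u, Y_{[i−1]} = y_{[i−1]}) = P(X_i = a | X_{i−1} = y_{i−1}) for all a ∈ 𝒳 and all u with positive conditional probability; consequently the mechanism releases position i without erasure with probability one, i.e., P(Y_i = X_i | X = x, Y_{[i−1]} = y_{[i−1]}) = 1. -/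
open Finset
open scoped Classical

noncomputable section

namespace GenotypeHiding

variable {X : Type} [Fintype X] [DecidableEq X]

/-- `P(X_{i₀} = u, Y_{[t]} = h_{[t]})` under the joint law `J` (here `i₀` is the single
sensitive position). -/
def pr1H {n : ℕ} (J : (Fin n → X) → (Fin n → Option X) → ℝ) (i₀ : Fin n) (t : ℕ)
    (u : X) (h : Fin n → Option X) : ℝ :=
  ∑ x : Fin n → X, ∑ y : Fin n → Option X,
    if x i₀ = u ∧ agreeN t y h then J x y else 0

/-- `P(X_i = a, X_{i₀} = u, Y_{[t]} = h_{[t]})` under the joint law `J`. -/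
def prI1H {n : ℕ} (J : (Fin n → X) → (Fin n → Option X) → ℝ) (i₀ : Fin n) (t : ℕ)
    (i : Fin n) (a : X) (u : X) (h : Fin n → Option X) : ℝ :=
  ∑ x : Fin n → X, ∑ y : Fin n → Option X,
    if x i = a ∧ x i₀ = u ∧ agreeN t y h then J x y else 0

/-- `P(X_i = a | X_{i₀} = u, Y_{[t]} = h_{[t]})` under the joint law `J`. -/
def cond1 {n : ℕ} (J : (Fin n → X) → (Fin n → Option X) → ℝ) (i₀ : Fin n) (t : ℕ)
    (i : Fin n) (a : X) (u : X) (h : Fin n → Option X) : ℝ :=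
  prI1H J i₀ t i a u h / pr1H J i₀ t u h

/-- `min_u P(X_i = a | X_{i₀} = u, Y_{[t]} = h_{[t]})`, the minimum being over all `u` with
`P(X_{i₀} = u, Y_{[t]} = h_{[t]}) > 0`. -/
def minC1 {n : ℕ} (J : (Fin n → X) → (Fin n → Option X) → ℝ) (i₀ : Fin n) (t : ℕ)
    (i : Fin n) (a : X) (h : Fin n → Option X) : ℝ :=
  sInf {r : ℝ | ∃ u : X, 0 < pr1H J i₀ t u h ∧ r = cond1 J i₀ t i a u h}

/-- `J` is the joint law of `(X, Y)` where `Y` is generated from `X ∼ p` by the sequential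
privacy mechanism with the single sensitive position `K = {i₀}`. -/
def IsSequentialMechanism1 {n : ℕ} (p : (Fin n → X) → ℝ) (i₀ : Fin n)
    (J : (Fin n → X) → (Fin n → Option X) → ℝ) : Prop :=
  (∀ x y, 0 ≤ J x y) ∧
  (∀ x, ∑ y : Fin n → Option X, J x y = p x) ∧
  (∀ x y, 0 < J x y → ∀ i : Fin n, y i = some (x i) ∨ y i = none) ∧
  (∀ (i : Fin n) (x : Fin n → X) (h : Fin n → Option X), 0 < prXH J (i : ℕ) x h →
    prXHY J (i : ℕ) x h i (some (x i))
      = (minC1 J i₀ (i : ℕ) i (x i) h / cond1 J i₀ (i : ℕ) i (x i) (x i₀) h)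
          * prXH J (i : ℕ) x h)

/-- `P(X_{[t]} = v_{[t]})`: the probability that the first `t` coordinates of `X` agree
with `v`. -/
def prPre {n : ℕ} (p : (Fin n → X) → ℝ) (t : ℕ) (v : Fin n → X) : ℝ :=
  ∑ x : Fin n → X, if (∀ j : Fin n, (j : ℕ) < t → x j = v j) then p x else 0

/-- `P(X_i = a)`. -/
def prOne {n : ℕ} (p : (Fin n → X) → ℝ) (i : Fin n) (a : X) : ℝ :=
  ∑ x : Fin n → X, if x i = a then p x else 0

/-- `P(X_i = a ∧ X_{i'} = a')`. -/
def prTwo {n : ℕ} (p : (Fin n → X) → ℝ) (i i' : Fin n) (a a' : X) : ℝ :=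
  ∑ x : Fin n → X, if x i = a ∧ x i' = a' then p x else 0

/-- `X_1 → X_2 → ⋯ → X_n` is a Markov chain: for every `t`,
`P(X_{[t+2]}) ⋅ P(X_{t+1}) = P(X_{[t+1]}) ⋅ P(X_{t+1}, X_{t+2})` (zero-based indices),
which is the cross-multiplied form of the chain rule factorization. -/
def IsMarkov {n : ℕ} (p : (Fin n → X) → ℝ) : Prop :=
  ∀ (t : ℕ) (ht : t + 1 < n) (v : Fin n → X),
    prPre p (t + 2) v * prOne p ⟨t, by omega⟩ (v ⟨t, by omega⟩)
      = prPre p (t + 1) v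
          * prTwo p ⟨t, by omega⟩ ⟨t + 1, ht⟩ (v ⟨t, by omega⟩) (v ⟨t + 1, ht⟩)

/-!
The likelihood `P(Y_{[t]} = h_{[t]} | X = x)` of a history is a product of per-position
release/erasure probabilities, the `k`-th depending only on `x_k` and the secret `x_{i₀}`. For
`i₀ < i` it is therefore a function of the prefix `x_{[i]}`, and it vanishes unless
`x_{i-1} = y_{i-1}`. Summing over prefix classes, the Markov property
`P(X_i = a | X_{[i]}) = P(X_i = a | X_{i-1})` turns `P(X_i = a | X_{i₀} = u, Y_{[i]} = h_{[i]})`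
into `P(X_i = a | X_{i-1} = y_{i-1})`, which does not depend on `u`. Hence the minimum over `u`
in the mechanism's release probability is attained at every `u`, and that probability is `1`.
-/

section Fibers

variable {ι κ R : Type*} [Fintype ι] [Fintype κ] [DecidableEq κ] [NonUnitalNonAssocSemiring R]

theorem sum_mul_eq_sum_mul_of_fibers (π : ι → κ) {f g : ι → R} {c d : R}
    (hfib : ∀ x, (∑ y with π y = π x, f y) * c = (∑ y with π y = π x, g y) * d) :
    (∑ y, f y) * c = (∑ y, g y) * d := by
  rw [← Finset.sum_fiberwise univ π f, ← Finset.sum_fiberwise univ π g, Finset.sum_mul,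
    Finset.sum_mul]
  refine Finset.sum_congr rfl fun w _ => ?_
  by_cases hw : ∃ x, π x = w
  · obtain ⟨x, rfl⟩ := hw
    exact hfib x
  · simp only [not_exists] at hw
    simp [hw]

end Fibers

theorem Fin.take_eq_take_iff {α : Type*} {n m : ℕ} (hm : m ≤ n) {x x' : Fin n → α} :
    Fin.take m hm x = Fin.take m hm x' ↔ ∀ k : Fin n, (k : ℕ) < m → x k = x' k := by
  constructor
  · intro hxx k hk
    simpa using congrFun hxx ⟨k, hk⟩
  · intro hxx
    funext k
    exact hxx _ k.isLt

theorem IsMarkov.sum_fiber_mul_prOne {n : ℕ} {p : (Fin n → X) → ℝ} (hM : IsMarkov p)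
    {j i : Fin n} (hji : (j : ℕ) + 1 = i) (v : Fin n → X) (a : X) :
    (∑ x with Fin.take i i.isLt.le x = Fin.take i i.isLt.le v, if x i = a then p x else 0)
        * prOne p j (v j)
      = (∑ x with Fin.take i i.isLt.le x = Fin.take i i.isLt.le v, p x)
        * prTwo p j i (v j) a := by
  set w := Function.update v i a
  have hw : ∀ k : Fin n, (k : ℕ) < i → w k = v k :=
    fun k hk => Function.update_of_ne (ne_of_lt (show k < i from hk)) a v
  have hpre : ∀ x : Fin n → X, (∀ k : Fin n, (k : ℕ) < j + 1 → x k = w k) ↔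
      Fin.take i i.isLt.le x = Fin.take i i.isLt.le v := by
    intro x
    rw [Fin.take_eq_take_iff, hji]
    exact forall_congr' fun k => imp_congr_right fun hk => by rw [hw k hk]
  have hpre₂ : ∀ x : Fin n → X, (∀ k : Fin n, (k : ℕ) < j + 2 → x k = w k) ↔
      Fin.take i i.isLt.le x = Fin.take i i.isLt.le v ∧ x i = a := by
    intro x
    rw [← hpre x]
    constructor
    · intro hx
      exact ⟨fun k hk => hx k (by omega), by simpa [w] using hx i (by omega)⟩
    · rintro ⟨hlt, hxi⟩ k hk
      rcases Nat.lt_succ_iff_lt_or_eq.mp hk with hk | hk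
      · exact hlt k hk
      · rw [show k = i from Fin.ext (by omega), hxi]
        exact (Function.update_self i a v).symm
  have hM' := hM j (hji ▸ i.isLt) w
  rw [show (⟨j + 1, hji ▸ i.isLt⟩ : Fin n) = i from Fin.ext hji] at hM'
  simp only [Fin.eta, w, Function.update_self, hw j (by omega)] at hM'
  rw [prPre, prPre] at hM'
  rw [Finset.sum_filter, Finset.sum_filter]
  simp_rw [← ite_and]
  rwa [← Finset.sum_congr rfl fun x _ => if_congr (hpre₂ x) rfl rfl,
    ← Finset.sum_congr rfl fun x _ => if_congr (hpre x) rfl rfl]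

section Mechanism

variable {n : ℕ} {p : (Fin n → X) → ℝ} {i₀ : Fin n}
  {J : (Fin n → X) → (Fin n → Option X) → ℝ}

theorem prI1H_eq_sum (t : ℕ) (i : Fin n) (a u : X) (h : Fin n → Option X) :
    prI1H J i₀ t i a u h = ∑ x, if x i = a ∧ x i₀ = u then prXH J t x h else 0 := by
  simp only [prI1H, prXH, ite_and, Finset.sum_ite_irrel, Finset.sum_const_zero]

theorem pr1H_eq_sum (t : ℕ) (u : X) (h : Fin n → Option X) :
    pr1H J i₀ t u h = ∑ x, if x i₀ = u then prXH J t x h else 0 := by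
  simp only [pr1H, prXH, ite_and, Finset.sum_ite_irrel, Finset.sum_const_zero]

theorem prXH_succ (h : Fin n → Option X) (k : Fin n) (x : Fin n → X) :
    prXH J (k + 1) x h = prXHY J k x h k (h k) := by
  refine Finset.sum_congr rfl fun y _ => if_congr ?_ rfl rfl
  constructor
  · intro hy
    exact ⟨hy k (by omega), fun l hl => hy l (by omega)⟩
  · rintro ⟨hyk, hy⟩ l hl
    rcases (Nat.lt_succ_iff_lt_or_eq.mp hl) with hl | hl
    · exact hy l hl
    · rwa [Fin.ext hl]

namespace IsSequentialMechanism1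

theorem p_nonneg (hJ : IsSequentialMechanism1 p i₀ J) (x : Fin n → X) : 0 ≤ p x :=
  hJ.2.1 x ▸ Finset.sum_nonneg fun y _ => hJ.1 x y

theorem prXH_nonneg (hJ : IsSequentialMechanism1 p i₀ J) (t : ℕ) (x : Fin n → X)
    (h : Fin n → Option X) : 0 ≤ prXH J t x h :=
  Finset.sum_nonneg fun y _ => by split_ifs; exacts [hJ.1 x y, le_rfl]

theorem prXHY_nonneg (hJ : IsSequentialMechanism1 p i₀ J) (t : ℕ) (x : Fin n → X)
    (h : Fin n → Option X) (k : Fin n) (c : Option X) : 0 ≤ prXHY J t x h k c :=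
  Finset.sum_nonneg fun y _ => by split_ifs; exacts [hJ.1 x y, le_rfl]

theorem prXHY_le_prXH (hJ : IsSequentialMechanism1 p i₀ J) (t : ℕ) (x : Fin n → X)
    (h : Fin n → Option X) (k : Fin n) (c : Option X) : prXHY J t x h k c ≤ prXH J t x h :=
  Finset.sum_le_sum fun y _ => by
    split_ifs with h₁ h₂ <;> first | exact le_rfl | exact hJ.1 x y | exact absurd h₁.2 h₂

theorem prXH_le_p (hJ : IsSequentialMechanism1 p i₀ J) (t : ℕ) (x : Fin n → X)
    (h : Fin n → Option X) : prXH J t x h ≤ p x :=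
  hJ.2.1 x ▸ Finset.sum_le_sum fun y _ => by split_ifs; exacts [le_rfl, hJ.1 x y]

theorem prXH_zero (hJ : IsSequentialMechanism1 p i₀ J) (x : Fin n → X) (h : Fin n → Option X) :
    prXH J 0 x h = p x := by
  simp [prXH, agreeN, hJ.2.1 x]

theorem prXHY_some_eq_zero (hJ : IsSequentialMechanism1 p i₀ J) (t : ℕ) {x : Fin n → X}
    (h : Fin n → Option X) {k : Fin n} {c : X} (hc : x k ≠ c) : prXHY J t x h k (some c) = 0 := by
  refine Finset.sum_eq_zero fun y _ => ite_eq_right_iff.mpr fun hy => ?_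
  by_contra hne
  rcases hJ.2.2.1 x y ((hJ.1 x y).lt_of_ne' hne) k with hyk | hyk <;> simp_all

theorem prXH_eq_add (hJ : IsSequentialMechanism1 p i₀ J) (t : ℕ) (x : Fin n → X)
    (h : Fin n → Option X) (k : Fin n) :
    prXH J t x h = prXHY J t x h k (some (x k)) + prXHY J t x h k none := by
  rw [prXH, prXHY, prXHY, ← Finset.sum_add_distrib]
  refine Finset.sum_congr rfl fun y _ => ?_
  rcases (hJ.1 x y).eq_or_lt with hxy | hxy
  · simp [← hxy]
  · rcases hJ.2.2.1 x y hxy k with hyk | hyk <;> simp [hyk]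

end IsSequentialMechanism1

def releaseProb (J : (Fin n → X) → (Fin n → Option X) → ℝ) (i₀ : Fin n) (h : Fin n → Option X)
    (k : Fin n) (a u : X) : ℝ :=
  minC1 J i₀ k k a h / cond1 J i₀ k k a u h

-- `P(Y_k = h_k | X = x, Y_{[k]} = h_{[k]})` under the mechanism, where `x_k = a`, `x_{i₀} = u`.
def historyFactor (J : (Fin n → X) → (Fin n → Option X) → ℝ) (i₀ : Fin n)
    (h : Fin n → Option X) (k : Fin n) (a u : X) : ℝ :=
  match h k with
  | some c => if a = c then releaseProb J i₀ h k a u else 0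
  | none => 1 - releaseProb J i₀ h k a u

def historyProb (J : (Fin n → X) → (Fin n → Option X) → ℝ) (i₀ : Fin n)
    (h : Fin n → Option X) (t : ℕ) (ht : t ≤ n) (x : Fin n → X) : ℝ :=
  ∏ k : Fin t, historyFactor J i₀ h (Fin.castLE ht k) (x (Fin.castLE ht k)) (x i₀)

variable {h : Fin n → Option X}

theorem historyProb_congr {t : ℕ} (ht : t ≤ n) {x x' : Fin n → X}
    (hxx : Fin.take t ht x = Fin.take t ht x') (hi₀ : x i₀ = x' i₀) :
    historyProb J i₀ h t ht x = historyProb J i₀ h t ht x' :=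
  Finset.prod_congr rfl fun k _ => by
    rw [hi₀, show x (Fin.castLE ht k) = x' (Fin.castLE ht k) from congrFun hxx k]

theorem historyProb_eq_zero {t : ℕ} (ht : t ≤ n) {x : Fin n → X} {k : Fin n} (hk : (k : ℕ) < t)
    {b : X} (hb : h k = some b) (hx : x k ≠ b) : historyProb J i₀ h t ht x = 0 :=
  Finset.prod_eq_zero (Finset.mem_univ ⟨k, hk⟩) (by simp [historyFactor, hb, hx])

namespace IsSequentialMechanism1

theorem prXH_succ_eq_historyFactor_mul (hJ : IsSequentialMechanism1 p i₀ J) (k : Fin n)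
    (x : Fin n → X) :
    prXH J (k + 1) x h = historyFactor J i₀ h k (x k) (x i₀) * prXH J k x h := by
  rw [prXH_succ]
  rcases (hJ.prXH_nonneg k x h).eq_or_lt with h0 | hpos
  · rw [← h0, mul_zero]
    exact le_antisymm (h0 ▸ hJ.prXHY_le_prXH _ x h k _) (hJ.prXHY_nonneg _ x h k _)
  have hrelease := hJ.2.2.2 k x h hpos
  rw [← releaseProb] at hrelease
  cases hk : h k with
  | some c =>
    by_cases hc : x k = c
    · simpa [historyFactor, hk, hc] using hrelease
    · simp [historyFactor, hk, hc, hJ.prXHY_some_eq_zero k h hc]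
  | none =>
    have hsplit := hJ.prXH_eq_add k x h k
    simp only [historyFactor, hk, sub_mul, one_mul]
    linarith

theorem prXH_eq_historyProb_mul (hJ : IsSequentialMechanism1 p i₀ J) {t : ℕ} (ht : t ≤ n)
    (x : Fin n → X) : prXH J t x h = historyProb J i₀ h t ht x * p x := by
  induction t with
  | zero => simp [historyProb, hJ.prXH_zero]
  | succ t ih =>
    rw [historyProb, Fin.prod_univ_castSucc, hJ.prXH_succ_eq_historyFactor_mul ⟨t, ht⟩ x,
      ih (by omega), historyProb, show Fin.castLE ht (Fin.last t) = ⟨t, ht⟩ from rfl]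
    simp only [Fin.castLE_castSucc]
    ring

theorem prXH_le_pr1H (hJ : IsSequentialMechanism1 p i₀ J) (t : ℕ) (x : Fin n → X) :
    prXH J t x h ≤ pr1H J i₀ t (x i₀) h := by
  rw [pr1H_eq_sum]
  simpa using Finset.single_le_sum (f := fun z => if z i₀ = x i₀ then prXH J t z h else 0)
    (fun z _ => by split_ifs; exacts [hJ.prXH_nonneg t z h, le_rfl]) (mem_univ x)

theorem prXH_le_prI1H (hJ : IsSequentialMechanism1 p i₀ J) (t : ℕ) (i : Fin n) (x : Fin n → X) :
    prXH J t x h ≤ prI1H J i₀ t i (x i) (x i₀) h := by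
  rw [prI1H_eq_sum]
  simpa using Finset.single_le_sum
    (f := fun z => if z i = x i ∧ z i₀ = x i₀ then prXH J t z h else 0)
    (fun z _ => by split_ifs; exacts [hJ.prXH_nonneg t z h, le_rfl]) (mem_univ x)

theorem prOne_pos (hJ : IsSequentialMechanism1 p i₀ J) {k : Fin n} {t : ℕ} (hk : (k : ℕ) < t)
    (ht : t ≤ n) {b : X} (hb : h k = some b) {u : X} (hu : 0 < pr1H J i₀ t u h) :
    0 < prOne p k b := by
  rw [pr1H_eq_sum] at hu
  obtain ⟨x, -, hx⟩ := Finset.exists_lt_of_sum_lt (f := fun _ => (0 : ℝ)) (by simpa using hu)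
  have hxpos : 0 < prXH J t x h := by split_ifs at hx <;> simp_all
  have hxb : x k = b := by
    by_contra hne
    rw [hJ.prXH_eq_historyProb_mul ht, historyProb_eq_zero ht hk hb hne, zero_mul] at hxpos
    exact hxpos.false
  calc 0 < prXH J t x h := hxpos
    _ ≤ p x := hJ.prXH_le_p t x h
    _ ≤ prOne p k b := by
      simpa [prOne, hxb] using Finset.single_le_sum (f := fun z => if z k = b then p z else 0)
        (fun z _ => by split_ifs; exacts [hJ.p_nonneg z, le_rfl]) (mem_univ x)

theorem prXHY_some_eq_prXH_of_cond1_eq (hJ : IsSequentialMechanism1 p i₀ J) (i : Fin n)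
    (x : Fin n → X) (hx : 0 < prXH J i x h)
    (hconst : ∀ u u', 0 < pr1H J i₀ i u h → 0 < pr1H J i₀ i u' h →
      cond1 J i₀ i i (x i) u h = cond1 J i₀ i i (x i) u' h) :
    prXHY J i x h i (some (x i)) = prXH J i x h := by
  have hu₀ : 0 < pr1H J i₀ i (x i₀) h := hx.trans_le (hJ.prXH_le_pr1H i x)
  have hmin : minC1 J i₀ i i (x i) h = cond1 J i₀ i i (x i) (x i₀) h := by
    have hset : {r | ∃ u, 0 < pr1H J i₀ i u h ∧ r = cond1 J i₀ i i (x i) u h}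
        = {cond1 J i₀ i i (x i) (x i₀) h} := by
      ext r
      constructor
      · rintro ⟨u, hu, rfl⟩
        exact hconst u _ hu hu₀
      · rintro rfl
        exact ⟨_, hu₀, rfl⟩
    rw [minC1, hset, csInf_singleton]
  have hcond : 0 < cond1 J i₀ i i (x i) (x i₀) h :=
    div_pos (hx.trans_le (hJ.prXH_le_prI1H i i x)) hu₀
  rw [hJ.2.2.2 i x h hx, hmin, div_self hcond.ne', one_mul]

theorem prI1H_mul_prOne (hJ : IsSequentialMechanism1 p i₀ J) (hM : IsMarkov p) {j i : Fin n}
    (hji : (j : ℕ) + 1 = i) (hi₀ : (i₀ : ℕ) < i) {b : X} (hb : h j = some b) (a u : X) :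
    prI1H J i₀ i i a u h * prOne p j b = pr1H J i₀ i u h * prTwo p j i b a := by
  rw [prI1H_eq_sum, pr1H_eq_sum]
  set π := Fin.take (i : ℕ) i.isLt.le
  refine sum_mul_eq_sum_mul_of_fibers π fun x => ?_
  set G := historyProb J i₀ h i i.isLt.le x
  -- On each fiber of `π`, `prXH J i · h` is `G * p`, so the Markov property applies fiberwise.
  have hfiber : ∀ y ∈ univ.filter (fun y => π y = π x), prXH J i y h = G * p y ∧ y i₀ = x i₀ := by
    intro y hy
    have hyx := (Finset.mem_filter.mp hy).2
    have hy₀ : y i₀ = x i₀ := (Fin.take_eq_take_iff _).mp hyx i₀ hi₀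
    exact ⟨by rw [hJ.prXH_eq_historyProb_mul i.isLt.le, historyProb_congr _ hyx hy₀], hy₀⟩
  set c := if x i₀ = u then G else 0
  have hA : ∑ y with π y = π x, (if y i = a ∧ y i₀ = u then prXH J i y h else 0)
      = c * ∑ y with π y = π x, (if y i = a then p y else 0) := by
    rw [Finset.mul_sum]
    refine Finset.sum_congr rfl fun y hy => ?_
    obtain ⟨hyG, hy₀⟩ := hfiber y hy
    by_cases hya : y i = a <;> by_cases hxu : x i₀ = u <;> simp [c, hya, hxu, hy₀, hyG]
  have hB : ∑ y with π y = π x, (if y i₀ = u then prXH J i y h else 0)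
      = c * ∑ y with π y = π x, p y := by
    rw [Finset.mul_sum]
    refine Finset.sum_congr rfl fun y hy => ?_
    obtain ⟨hyG, hy₀⟩ := hfiber y hy
    by_cases hxu : x i₀ = u <;> simp [c, hxu, hy₀, hyG]
  rw [hA, hB, mul_assoc, mul_assoc]
  by_cases hxb : x j = b
  · rw [← hxb, hM.sum_fiber_mul_prOne hji x a]
  · simp [c, G, historyProb_eq_zero i.isLt.le (by omega : (j : ℕ) < i) hb hxb]

theorem cond1_eq_prTwo_div_prOne (hJ : IsSequentialMechanism1 p i₀ J) (hM : IsMarkov p)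
    {j i : Fin n} (hji : (j : ℕ) + 1 = i) (hi₀ : (i₀ : ℕ) < i) {b : X} (hb : h j = some b)
    (a u : X) (hu : 0 < pr1H J i₀ i u h) :
    cond1 J i₀ i i a u h = prTwo p j i b a / prOne p j b := by
  rw [cond1, div_eq_div_iff hu.ne' (hJ.prOne_pos (by omega) i.isLt.le hb hu).ne']
  linear_combination hJ.prI1H_mul_prOne hM hji hi₀ hb a u

end IsSequentialMechanism1

end Mechanism

/-- if `X_1, …, X_n` is a Markov chain and `K = {1}` (zero-based: the single
sensitive position `i₀ = 0`), then under the sequential privacy mechanism, for every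
position `i > 1` whose previous released symbol satisfies `y_{i-1} = b ≠ ∗`, one has
`P(X_i = a | X_1 = u, Y_{[i-1]} = h) = P(X_i = a | X_{i-1} = b)` for all `a` and all `u`
of positive conditional probability; consequently the mechanism releases position `i`
without erasure with probability one:
`P(Y_i = X_i | X = x, Y_{[i-1]} = h) = 1`. -/
theorem markov_release_after_release {n : ℕ} (hn : 1 ≤ n)
    (p : (Fin n → X) → ℝ)
    (hMarkov : IsMarkov p)
    (J : (Fin n → X) → (Fin n → Option X) → ℝ)
    (hJ : IsSequentialMechanism1 p ⟨0, hn⟩ J)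
    (i : Fin n) (hi : 0 < (i : ℕ))
    (h : Fin n → Option X) (b : X)
    (hb : h ⟨(i : ℕ) - 1, by omega⟩ = some b) :
    (∀ (a u : X), 0 < pr1H J ⟨0, hn⟩ (i : ℕ) u h →
      cond1 J ⟨0, hn⟩ (i : ℕ) i a u h
        = prTwo p ⟨(i : ℕ) - 1, by omega⟩ i b a / prOne p ⟨(i : ℕ) - 1, by omega⟩ b) ∧
    (∀ x : Fin n → X, 0 < prXH J (i : ℕ) x h →
      prXHY J (i : ℕ) x h i (some (x i)) = prXH J (i : ℕ) x h) := by
  have hcond := hJ.cond1_eq_prTwo_div_prOne hMarkov (j := ⟨(i : ℕ) - 1, by omega⟩)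
    (by simp only; omega) hi hb
  exact ⟨hcond, fun x hx => hJ.prXHY_some_eq_prXH_of_cond1_eq i x hx
    fun u u' hu hu' => by rw [hcond _ u hu, hcond _ u' hu']⟩

end GenotypeHiding
end
end
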